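/- Let R be a ring, F an additive covariant functor from left R-modules to abelian groups, and A a left R-module. There is an isomorphism of abelian groups Nat(F, Hom(A,-)) ≅ Hom_R(A, w(F)), natural in both F and A, where w(F) = Nat(F, Hom(R,-)) is made into a left R-module by ((r•η)_M(x))(s) := (η_M(x))(s·r) for r, s ∈ R, x ∈ F(M). In other words, the defect w and the contravariant Yoneda embedding form a right adjoint pair. -/

import Mathlib

/-! By Yoneda, `Nat(Hom(A,-), Hom(R,-)) ≅ Hom_R(R, A) ≅ A`, so each `a : A` gives the natural
transformation `hatNat A a`, and `a ↦ hatNat A a` is `R`-linear into the defect of `Hom(A,-)`.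
Postcomposing `η : F ⟶ Hom(A,-)` with these gives `A →ₗ[R] w(F)`. Conversely, `g : A →ₗ[R] w(F)`
yields `F ⟶ Hom(A,-)` by evaluating `(g a)_M(x) : R → M` at `1`; this is `R`-linear in `a`
because `(r • ν)_M(x)(1) = ν_M(x)(r) = r • ν_M(x)(1)`, and the two constructions are inverse
since `ν_M(x)(s) = (s • ν)_M(x)(1)`. -/

open CategoryTheory Opposite

universe u

variable {R : Type u} [Ring R]

/-- The forgetful functor `Hom(R,-)`. -/
def forgetfulFunctor (R : Type u) [Ring R] : ModuleCat.{u} R ⥤ AddCommGrpCat.{u} :=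
  preadditiveCoyoneda.obj (op (ModuleCat.of R R))

/-- An element of the value of the forgetful functor, viewed as a linear map `R → M`. -/
def toHom {M : ModuleCat.{u} R} (x : (forgetfulFunctor R).obj M) :
    ModuleCat.of R R ⟶ M := x

/-- Right multiplication by `r` as an endomorphism of the regular module. -/
def rmul (r : R) : ModuleCat.of R R ⟶ ModuleCat.of R R :=
  ModuleCat.ofHom (LinearMap.toSpanSingleton R R r)

variable {F : ModuleCat.{u} R ⥤ AddCommGrpCat.{u}}

theorem defect_ext {η ξ : F ⟶ forgetfulFunctor R}
    (h : ∀ (M : ModuleCat.{u} R) (x : F.obj M) (s : R),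
      toHom (η.app M x) s = toHom (ξ.app M x) s) : η = ξ := by
  apply NatTrans.ext
  funext M
  apply AddCommGrpCat.ext
  intro x
  exact ModuleCat.hom_ext (LinearMap.ext fun s => h M x s)

theorem smul_app' (r : R) (η : F ⟶ forgetfulFunctor R) (M : ModuleCat.{u} R)
    (x : F.obj M) (s : R) :
    toHom ((η ≫ preadditiveCoyoneda.map (rmul r).op).app M x) s =
      toHom (η.app M x) (s * r) := rfl

theorem add_app' (η ξ : F ⟶ forgetfulFunctor R) (M : ModuleCat.{u} R)
    (x : F.obj M) (s : R) :
    toHom ((η + ξ).app M x) s = toHom (η.app M x) s + toHom (ξ.app M x) s := rfl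

theorem zero_app' (M : ModuleCat.{u} R) (x : F.obj M) (s : R) :
    toHom ((0 : F ⟶ forgetfulFunctor R).app M x) s = 0 := rfl

/-- The left `R`-module structure on the defect `w(F) = Nat(F, Hom(R,-))`, given by
`((r • η)_M(x))(s) = (η_M(x))(s * r)`. -/
instance defectModule : Module R (F ⟶ forgetfulFunctor R) where
  smul r η := η ≫ preadditiveCoyoneda.map (rmul r).op
  one_smul η := defect_ext fun M x s => congrArg (toHom (η.app M x)) (mul_one s)
  mul_smul r r' η := defect_ext fun M x s =>
    congrArg (toHom (η.app M x)) (mul_assoc s r r').symm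
  smul_zero _ := defect_ext fun _ _ _ => rfl
  smul_add _ _ _ := defect_ext fun _ _ _ => rfl
  add_smul r r' η := defect_ext fun M x s =>
    (congrArg (toHom (η.app M x)) (mul_add s r r')).trans
      (map_add (toHom (η.app M x)).hom _ _)
  zero_smul η := defect_ext fun M x s =>
    (congrArg (toHom (η.app M x)) (mul_zero s)).trans
      (map_zero (toHom (η.app M x)).hom)

/-- The natural transformation `Hom(A,-) ⟶ Hom(R,-)` induced by `a ∈ A`, i.e. by the
map `R → A`, `r ↦ r • a`. -/
def hatNat (A : ModuleCat.{u} R) (a : A) :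
    preadditiveCoyoneda.obj (op A) ⟶ forgetfulFunctor R :=
  preadditiveCoyoneda.map (Quiver.Hom.op (ModuleCat.ofHom (LinearMap.toSpanSingleton R A a) : ModuleCat.of R R ⟶ A))

def toHomFrom {A M : ModuleCat.{u} R} (x : (preadditiveCoyoneda.obj (op A)).obj M) :
    A ⟶ M := x

theorem coyoneda_natTrans_ext {A : ModuleCat.{u} R} {η ξ : F ⟶ preadditiveCoyoneda.obj (op A)}
    (h : ∀ (M : ModuleCat.{u} R) (x : F.obj M) (a : A),
      toHomFrom (η.app M x) a = toHomFrom (ξ.app M x) a) : η = ξ := by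
  ext M x
  exact ModuleCat.hom_ext (LinearMap.ext (h M x))

lemma map_op_comp_hatNat {A B : ModuleCat.{u} R} (f : A ⟶ B) (a : A) :
    preadditiveCoyoneda.map f.op ≫ hatNat A a = hatNat B (f a) :=
  defect_ext fun _ x s => congrArg (toHomFrom x) (f.hom.map_smul s a)

def hatNatLinear (A : ModuleCat.{u} R) :
    A →ₗ[R] (preadditiveCoyoneda.obj (op A) ⟶ forgetfulFunctor R) where
  toFun := hatNat A
  map_add' a b := defect_ext fun M x s => by
    rw [add_app']
    exact (congrArg (toHomFrom x) (smul_add s a b)).trans (map_add (toHomFrom x).hom _ _)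
  map_smul' r a := defect_ext fun M x s =>
    congrArg (toHomFrom x) (smul_smul s r a)

variable {F' : ModuleCat.{u} R ⥤ AddCommGrpCat.{u}}

def defectMap (θ : F' ⟶ F) : (F ⟶ forgetfulFunctor R) →ₗ[R] (F' ⟶ forgetfulFunctor R) where
  toFun ν := θ ≫ ν
  map_add' := Preadditive.comp_add _ _ _ θ
  map_smul' _ ν := (Category.assoc θ ν _).symm

def evalOne (M : ModuleCat.{u} R) (x : F.obj M) : (F ⟶ forgetfulFunctor R) →ₗ[R] M where
  toFun ν := toHom (ν.app M x) 1
  map_add' _ _ := rfl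
  map_smul' r ν := by
    show toHom (ν.app M x) (1 * r) = r • toHom (ν.app M x) 1
    rw [one_mul, ← (toHom (ν.app M x)).hom.map_smul, smul_eq_mul, mul_one]

lemma evalOne_smul (M : ModuleCat.{u} R) (x : F.obj M) (s : R) (ν : F ⟶ forgetfulFunctor R) :
    evalOne M x (s • ν) = toHom (ν.app M x) s :=
  congrArg (toHom (ν.app M x)) (one_mul s)

lemma evalOne_add (M : ModuleCat.{u} R) (x y : F.obj M) :
    evalOne M (x + y) = evalOne M x + evalOne M y :=
  LinearMap.ext fun ν => by
    show toHom (ν.app M (x + y)) 1 = _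
    rw [map_add]
    rfl

lemma evalOne_map {M N : ModuleCat.{u} R} (f : M ⟶ N) (x : F.obj M) :
    evalOne N (F.map f x) = f.hom ∘ₗ evalOne M x :=
  LinearMap.ext fun ν => by
    show toHom (ν.app N (F.map f x)) 1 = _
    rw [← ConcreteCategory.comp_apply, ν.naturality]
    rfl

variable (F) in
def toDefectHom (A : ModuleCat.{u} R) (η : F ⟶ preadditiveCoyoneda.obj (op A)) :
    A →ₗ[R] (F ⟶ forgetfulFunctor R) :=
  defectMap η ∘ₗ hatNatLinear A

def ofDefectHom (A : ModuleCat.{u} R) (g : A →ₗ[R] (F ⟶ forgetfulFunctor R)) :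
    F ⟶ preadditiveCoyoneda.obj (op A) where
  app M := AddCommGrpCat.ofHom <| AddMonoidHom.mk'
    (fun x => ModuleCat.ofHom (evalOne M x ∘ₗ g))
    (fun x y => by rw [evalOne_add, LinearMap.add_comp]; rfl)
  naturality M N f := by
    ext x
    refine ModuleCat.hom_ext ?_
    show evalOne N (F.map f x) ∘ₗ g = f.hom ∘ₗ (evalOne M x ∘ₗ g)
    rw [evalOne_map, LinearMap.comp_assoc]

def defectAdjunctionEquiv (F : ModuleCat.{u} R ⥤ AddCommGrpCat.{u}) (A : ModuleCat.{u} R) :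
    (F ⟶ preadditiveCoyoneda.obj (op A)) ≃+ (A →ₗ[R] (F ⟶ forgetfulFunctor R)) where
  toFun := toDefectHom F A
  invFun := ofDefectHom A
  left_inv η := coyoneda_natTrans_ext fun M x a =>
    congrArg (toHomFrom (η.app M x)) (one_smul R a)
  right_inv g := LinearMap.ext fun a => defect_ext fun M x s => by
    show evalOne M x (g (s • a)) = _
    rw [g.map_smul, evalOne_smul]
  map_add' η ξ := LinearMap.ext fun a => Preadditive.add_comp _ _ _ η ξ (hatNat A a)

/-- the defect `w(F) = Nat(F, Hom(R,-))`, with the module structure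
`((r • η)_M(x))(s) = (η_M(x))(s * r)`, and the contravariant Yoneda embedding form a
right adjoint pair: `Nat(F, Hom(A,-)) ≅ Hom_R(A, w(F))`, an isomorphism of abelian
groups natural in both `F` and `A`. -/
theorem statement5 (R : Type u) [Ring R] :
    ∃ e : (F : ModuleCat.{u} R ⥤ AddCommGrpCat.{u}) → F.Additive → (A : ModuleCat.{u} R) →
        ((F ⟶ preadditiveCoyoneda.obj (op A)) ≃+
          (↑A →ₗ[R] (F ⟶ forgetfulFunctor R))),
      (∀ (F : ModuleCat.{u} R ⥤ AddCommGrpCat.{u}) (hF : F.Additive) (A : ModuleCat.{u} R)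
          (η : F ⟶ preadditiveCoyoneda.obj (op A)) (a : A),
          e F hF A η a = η ≫ hatNat A a) ∧
      (∀ (F F' : ModuleCat.{u} R ⥤ AddCommGrpCat.{u}) (hF : F.Additive) (hF' : F'.Additive)
          (θ : F' ⟶ F) (A : ModuleCat.{u} R) (η : F ⟶ preadditiveCoyoneda.obj (op A))
          (a : A),
          e F' hF' A (θ ≫ η) a = θ ≫ e F hF A η a) ∧
      (∀ (F : ModuleCat.{u} R ⥤ AddCommGrpCat.{u}) (hF : F.Additive)
          (A B : ModuleCat.{u} R) (f : A ⟶ B)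
          (η : F ⟶ preadditiveCoyoneda.obj (op B)) (a : A),
          e F hF A (η ≫ preadditiveCoyoneda.map f.op) a = e F hF B η (f a)) :=
  ⟨fun F _ A => defectAdjunctionEquiv F A,
    fun _ _ _ _ _ => rfl,
    fun _ _ _ _ θ _ η _ => Category.assoc θ η _,
    fun _ _ _ _ f η a =>
      (Category.assoc η _ _).trans (congrArg (η ≫ ·) (map_op_comp_hatNat f a))⟩
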